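/- arXiv:1412.0881 — 3 statements merged into one kernel-verified Lean document; each statement's English description precedes it below -/
import Mathlib

section
/- For every colouring of ℚ with finitely many colours, there exists a non-identity order automorphism of ℚ that preserves the colouring. In other words, the group of order automorphisms of ℚ admits no distinguishing colouring with finitely many colours. -/
/-!
Choose an open interval `(a, b)` in which the number of colours that occur is minimal. Then every
colour occurring in `(a, b)` occurs in every open subinterval, so `(a, b)` with the induced
colouring is a countable dense linear order without endpoints in which each colour class is dense.
A back-and-forth argument through colour-preserving finite partial isomorphisms, as in Cantor's
isomorphism theorem, shows that such a coloured order is homogeneous: any point can be sent to any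
other point of the same colour by a colour-preserving automorphism. Sending a point of `(a, b)` to a
different point of the same colour and extending by the identity outside `(a, b)` gives the required
non-identity automorphism of `ℚ`.
-/

open Order Set

variable {α β C : Type*} [LinearOrder α] [LinearOrder β]

def IsDenseColour (c : α → C) (k : C) : Prop :=
  ∀ x y, x < y → ∃ m ∈ Ioo x y, c m = k

theorem IsDenseColour.exists_between_finsets [DenselyOrdered α] [NoMinOrder α] [NoMaxOrder α]
    [Nonempty α] {c : α → C} {k : C} (h : IsDenseColour c k) (lo hi : Finset α)
    (lo_lt_hi : ∀ x ∈ lo, ∀ y ∈ hi, x < y) :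
    ∃ m, (∀ x ∈ lo, x < m) ∧ (∀ y ∈ hi, m < y) ∧ c m = k := by
  obtain ⟨m₁, hlo₁, hhi₁⟩ := Order.exists_between_finsets lo hi lo_lt_hi
  obtain ⟨m₂, hlo₂, hm₂⟩ := Order.exists_between_finsets lo {m₁} fun x hx y hy => by
    rw [Finset.mem_singleton.1 hy]
    exact hlo₁ x hx
  obtain ⟨m, ⟨h₂, h₁⟩, hm⟩ := h m₂ m₁ (hm₂ m₁ (Finset.mem_singleton_self _))
  exact ⟨m, fun x hx => (hlo₂ x hx).trans h₂, fun y hy => h₁.trans (hhi₁ y hy), hm⟩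

def ColouredPartialIso (cα : α → C) (cβ : β → C) : Type _ :=
  { f : PartialIso α β // ∀ p ∈ f.val, cβ p.2 = cα p.1 }

namespace ColouredPartialIso

variable {cα : α → C} {cβ : β → C}

noncomputable instance : Preorder (ColouredPartialIso cα cβ) := Subtype.preorder _

instance : Inhabited (ColouredPartialIso cα cβ) :=
  ⟨⟨default, fun _ h => (Finset.notMem_empty _ h).elim⟩⟩

protected def comm (f : ColouredPartialIso cα cβ) : ColouredPartialIso cβ cα :=
  ⟨f.1.comm, fun p hp => by
    obtain ⟨q, hq, rfl⟩ := Finset.mem_image.1 hp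
    exact (f.2 q hq).symm⟩

theorem exists_le_mem (f : ColouredPartialIso cα cβ) {a : α} {b : β} (hc : cβ b = cα a)
    (hcmp : ∀ p ∈ f.1.1, cmp p.1 a = cmp p.2 b) :
    ∃ g : ColouredPartialIso cα cβ, f ≤ g ∧ (a, b) ∈ g.1.1 := by
  refine ⟨⟨⟨insert (a, b) f.1.1, fun p hp q hq => ?_⟩, fun p hp => ?_⟩,
    Finset.subset_insert _ _, Finset.mem_insert_self _ _⟩
  · rcases Finset.mem_insert.1 hp with rfl | hp <;> rcases Finset.mem_insert.1 hq with rfl | hq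
    · simp only [cmp_self_eq_eq]
    · exact cmp_eq_cmp_symm.1 (hcmp q hq)
    · exact hcmp p hp
    · exact f.1.2 p hp q hq
  · rcases Finset.mem_insert.1 hp with rfl | hp
    · exact hc
    · exact f.2 p hp

theorem exists_across [DenselyOrdered β] [NoMinOrder β] [NoMaxOrder β] [Nonempty β]
    (f : ColouredPartialIso cα cβ) (a : α) (ha : IsDenseColour cβ (cα a)) :
    ∃ b, cβ b = cα a ∧ ∀ p ∈ f.1.1, cmp p.1 a = cmp p.2 b := by
  by_cases h : ∃ b, (a, b) ∈ f.1.1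
  · obtain ⟨b, hb⟩ := h
    exact ⟨b, f.2 _ hb, fun p hp => f.1.2 p hp _ hb⟩
  obtain ⟨b, hlo, hhi, hb⟩ := ha.exists_between_finsets
    ({p ∈ f.1.1 | p.1 < a}.image Prod.snd) ({p ∈ f.1.1 | a < p.1}.image Prod.snd) (by
      intro x hx y hy
      simp only [Finset.mem_image, Finset.mem_filter] at hx hy
      obtain ⟨p, ⟨hp, hpa⟩, rfl⟩ := hx
      obtain ⟨q, ⟨hq, haq⟩, rfl⟩ := hy
      exact (lt_iff_lt_of_cmp_eq_cmp (f.1.2 p hp q hq)).1 (hpa.trans haq))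
  refine ⟨b, hb, ?_⟩
  rintro ⟨p₁, p₂⟩ hp
  rcases lt_or_gt_of_ne fun he : p₁ = a => h ⟨p₂, he ▸ hp⟩ with hl | hr
  · rw [(cmp_eq_lt_iff _ _).2 hl,
      (cmp_eq_lt_iff _ _).2 (hlo _ (Finset.mem_image_of_mem _ (Finset.mem_filter.2 ⟨hp, hl⟩)))]
  · rw [(cmp_eq_gt_iff _ _).2 hr,
      (cmp_eq_gt_iff _ _).2 (hhi _ (Finset.mem_image_of_mem _ (Finset.mem_filter.2 ⟨hp, hr⟩)))]

theorem exists_across_symm [DenselyOrdered α] [NoMinOrder α] [NoMaxOrder α] [Nonempty α]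
    (f : ColouredPartialIso cα cβ) (b : β) (hb : IsDenseColour cα (cβ b)) :
    ∃ a, cβ b = cα a ∧ ∀ p ∈ f.1.1, cmp p.1 a = cmp p.2 b := by
  obtain ⟨a, ha, hcmp⟩ := ColouredPartialIso.exists_across f.comm b hb
  exact ⟨a, ha.symm, fun p hp => (hcmp (p.2, p.1) (Finset.mem_image_of_mem _ hp)).symm⟩

def definedAtLeft [DenselyOrdered β] [NoMinOrder β] [NoMaxOrder β] [Nonempty β]
    (hβ : ∀ a, IsDenseColour cβ (cα a)) (a : α) : Cofinal (ColouredPartialIso cα cβ) where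
  carrier := {f | ∃ b, (a, b) ∈ f.1.1}
  isCofinal f := by
    obtain ⟨b, hc, hcmp⟩ := f.exists_across a (hβ a)
    obtain ⟨g, hfg, hg⟩ := f.exists_le_mem hc hcmp
    exact ⟨g, ⟨b, hg⟩, hfg⟩

def definedAtRight [DenselyOrdered α] [NoMinOrder α] [NoMaxOrder α] [Nonempty α]
    (hα : ∀ b, IsDenseColour cα (cβ b)) (b : β) : Cofinal (ColouredPartialIso cα cβ) where
  carrier := {f | ∃ a, (a, b) ∈ f.1.1}
  isCofinal f := by
    obtain ⟨a, hc, hcmp⟩ := f.exists_across_symm b (hα b)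
    obtain ⟨g, hfg, hg⟩ := f.exists_le_mem hc hcmp
    exact ⟨g, ⟨a, hg⟩, hfg⟩

end ColouredPartialIso

open ColouredPartialIso in
theorem exists_orderIso_apply_eq_of_isDenseColour
    [Countable α] [DenselyOrdered α] [NoMinOrder α] [NoMaxOrder α]
    [Countable β] [DenselyOrdered β] [NoMinOrder β] [NoMaxOrder β] {cα : α → C} {cβ : β → C}
    (hα : ∀ b, IsDenseColour cα (cβ b)) (hβ : ∀ a, IsDenseColour cβ (cα a)) {a₀ : α} {b₀ : β}
    (h₀ : cβ b₀ = cα a₀) :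
    ∃ φ : α ≃o β, φ a₀ = b₀ ∧ ∀ a, cβ (φ a) = cα a := by
  have : Nonempty α := ⟨a₀⟩
  have : Nonempty β := ⟨b₀⟩
  cases nonempty_encodable α
  cases nonempty_encodable β
  obtain ⟨f₀, -, hf₀⟩ := (default : ColouredPartialIso cα cβ).exists_le_mem h₀
    fun _ h => (Finset.notMem_empty _ h).elim
  let D : α ⊕ β → Cofinal (ColouredPartialIso cα cβ) :=
    Sum.elim (definedAtLeft hβ) (definedAtRight hα)
  let I := idealOfCofinals f₀ D
  have compatible : ∀ {p q : α × β}, (∃ f ∈ I, p ∈ f.1.1) → (∃ g ∈ I, q ∈ g.1.1) →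
      cmp p.1 q.1 = cmp p.2 q.2 := by
    rintro p q ⟨f, hf, hp⟩ ⟨g, hg, hq⟩
    obtain ⟨h, -, hfh, hgh⟩ := I.directed f hf g hg
    exact h.1.2 p (hfh hp) q (hgh hq)
  have hF : ∀ a, ∃ b, ∃ f ∈ I, (a, b) ∈ f.1.1 := fun a => by
    obtain ⟨f, ⟨b, hb⟩, hf⟩ := cofinal_meets_idealOfCofinals f₀ D (Sum.inl a)
    exact ⟨b, f, hf, hb⟩
  have hG : ∀ b, ∃ a, ∃ f ∈ I, (a, b) ∈ f.1.1 := fun b => by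
    obtain ⟨f, ⟨a, ha⟩, hf⟩ := cofinal_meets_idealOfCofinals f₀ D (Sum.inr b)
    exact ⟨a, f, hf, ha⟩
  choose F hF using hF
  choose G hG using hG
  refine ⟨OrderIso.ofCmpEqCmp F G fun a b => compatible (hF a) (hG b), ?_, fun a => ?_⟩
  · have h := compatible (hF a₀) ⟨f₀, mem_idealOfCofinals f₀ D, hf₀⟩
    rw [cmp_self_eq_eq] at h
    exact (cmp_eq_eq_iff _ _).1 h.symm
  · obtain ⟨f, -, hf⟩ := hF a
    exact f.2 _ hf

theorem exists_Ioo_forall_isDenseColour [Nontrivial α] [Finite C] (c : α → C) :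
    ∃ a b, a < b ∧ ∀ x : Ioo a b, IsDenseColour (fun y : Ioo a b => c y) (c x.1) := by
  obtain ⟨a₀, b₀, h₀⟩ := exists_pair_lt α
  obtain ⟨⟨a, b⟩, hab, hmin⟩ :=
    (wellFounded_lt.onFun (f := fun p : α × α => (c '' Ioo p.1 p.2).ncard)).has_min
      {p | p.1 < p.2} ⟨(a₀, b₀), h₀⟩
  refine ⟨a, b, hab, fun x u v huv => ?_⟩
  have hsub : Ioo (u : α) v ⊆ Ioo a b := Ioo_subset_Ioo u.2.1.le v.2.2.le
  have hcolours : c '' Ioo (u : α) v = c '' Ioo a b :=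
    eq_of_subset_of_ncard_le (image_mono hsub) (not_lt.1 (hmin (u, v) huv)) (toFinite _)
  obtain ⟨m, hm, hmx⟩ : c x ∈ c '' Ioo (u : α) v := hcolours ▸ mem_image_of_mem c x.2
  exact ⟨⟨m, hsub hm⟩, hm, hmx⟩

theorem Set.OrdConnected.strictMono_ofSubtype {s : Set α} [DecidablePred (· ∈ s)]
    (hs : s.OrdConnected) (φ : s ≃o s) : StrictMono (Equiv.Perm.ofSubtype φ.toEquiv) := by
  have lt_of_mem_of_notMem : ∀ {x y z}, x ∈ s → y ∉ s → z ∈ s → x < y → z < y :=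
    fun hx hy hz hxy => lt_of_not_ge fun hyz => hy (hs.out hx hz ⟨hxy.le, hyz⟩)
  have lt_of_notMem_of_mem : ∀ {x y z}, x ∉ s → y ∈ s → z ∈ s → x < y → x < z :=
    fun hx hy hz hxy => lt_of_not_ge fun hzx => hx (hs.out hz hy ⟨hzx, hxy.le⟩)
  intro x y hxy
  by_cases hx : x ∈ s <;> by_cases hy : y ∈ s
  · rw [Equiv.Perm.ofSubtype_apply_of_mem _ hx, Equiv.Perm.ofSubtype_apply_of_mem _ hy]
    exact φ.strictMono (Subtype.mk_lt_mk.2 hxy)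
  · rw [Equiv.Perm.ofSubtype_apply_of_mem _ hx, Equiv.Perm.ofSubtype_apply_of_not_mem _ hy]
    exact lt_of_mem_of_notMem hx hy (φ _).2 hxy
  · rw [Equiv.Perm.ofSubtype_apply_of_not_mem _ hx, Equiv.Perm.ofSubtype_apply_of_mem _ hy]
    exact lt_of_notMem_of_mem hx hy (φ _).2 hxy
  · rwa [Equiv.Perm.ofSubtype_apply_of_not_mem _ hx, Equiv.Perm.ofSubtype_apply_of_not_mem _ hy]

def OrderIso.ofSubtype {s : Set α} [DecidablePred (· ∈ s)] (hs : s.OrdConnected) (φ : s ≃o s) :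
    α ≃o α :=
  { Equiv.Perm.ofSubtype φ.toEquiv with
    map_rel_iff' := (hs.strictMono_ofSubtype φ).le_iff_le }

theorem OrderIso.ofSubtype_apply_of_mem {s : Set α} [DecidablePred (· ∈ s)] (hs : s.OrdConnected)
    (φ : s ≃o s) {x : α} (hx : x ∈ s) : OrderIso.ofSubtype hs φ x = φ ⟨x, hx⟩ :=
  Equiv.Perm.ofSubtype_apply_of_mem _ hx

theorem OrderIso.ofSubtype_apply_of_notMem {s : Set α} [DecidablePred (· ∈ s)]
    (hs : s.OrdConnected) (φ : s ≃o s) {x : α} (hx : x ∉ s) : OrderIso.ofSubtype hs φ x = x :=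
  Equiv.Perm.ofSubtype_apply_of_not_mem _ hx

theorem exists_orderIso_ne_refl_forall_colour_eq [Countable α] [DenselyOrdered α] [Nontrivial α]
    [Finite C] (c : α → C) : ∃ γ : α ≃o α, γ ≠ OrderIso.refl α ∧ ∀ x, c (γ x) = c x := by
  obtain ⟨a, b, hab, hdense⟩ := exists_Ioo_forall_isDenseColour c
  obtain ⟨p⟩ := nonempty_Ioo_subtype hab
  obtain ⟨r, hpr⟩ := exists_gt p
  obtain ⟨q, hpq, hq⟩ := hdense p p r hpr
  obtain ⟨φ, hφ, hφc⟩ := exists_orderIso_apply_eq_of_isDenseColour hdense hdense hq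
  refine ⟨OrderIso.ofSubtype ordConnected_Ioo φ, fun h => ?_, fun x => ?_⟩
  · have hp := DFunLike.congr_fun h (p : α)
    rw [OrderIso.ofSubtype_apply_of_mem _ _ p.2, hφ] at hp
    exact hpq.1.ne' (Subtype.ext hp)
  by_cases hx : x ∈ Ioo a b
  · rw [OrderIso.ofSubtype_apply_of_mem _ _ hx]
    exact hφc ⟨x, hx⟩
  · rw [OrderIso.ofSubtype_apply_of_notMem _ _ hx]

theorem qNoFiniteDistinguishing (C : Type) [Finite C] (c : ℚ → C) :
    ∃ γ : ℚ ≃o ℚ, γ ≠ OrderIso.refl ℚ ∧ ∀ q : ℚ, c (γ q) = c q :=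
  exists_orderIso_ne_refl_forall_colour_eq c
end

section
/- In the graph G on ℚ⁺ ∪ ℚ⁻ with edges q⁺r⁻ for q < r, for every q ∈ ℚ the vertex q⁻ is the unique vertex w with N(w) = (⋂_{v ∈ N(q⁺)} N(v)) \ {q⁺}, where N denotes the neighbourhood. -/
/-!
Every neighbourhood is an open ray on the other side: `N(q⁺) = {r⁻ | q < r}` and
`N(r⁻) = {s⁺ | s < r}`. By density, intersecting the rays `{s⁺ | s < r}` over all `r > q` gives the
closed ray `{s⁺ | s ≤ q}`, and removing `q⁺` leaves `N(q⁻)`. Since `ℚ` has no endpoints, the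
neighbourhood of a vertex determines it.
-/

open Sum

/-- The graph on two copies of ℚ with `inl q` adjacent to `inr r` iff `q < r`. -/
def G : SimpleGraph (ℚ ⊕ ℚ) where
  Adj u v := match u, v with
    | .inl q, .inr r => q < r
    | .inr r, .inl q => q < r
    | _, _ => False
  symm := by constructor; intro u v h; cases u <;> cases v <;> simp_all
  loopless := by constructor; intro u h; cases u <;> simp_all

open Set

theorem Set.biInter_Ioi_Iio {α : Type*} [LinearOrder α] [DenselyOrdered α] (a : α) :
    ⋂ b ∈ Ioi a, Iio b = Iic a := by
  ext x
  simp only [mem_iInter₂, mem_Ioi, mem_Iio, mem_Iic]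
  exact ⟨fun h => le_of_forall_gt_imp_ge_of_dense fun b hb => (h b hb).le,
    fun hx b hb => hx.trans_lt hb⟩

lemma G_neighborSet_inl (q : ℚ) : G.neighborSet (inl q) = inr '' Ioi q := by
  ext (x | x) <;> simp [G]

lemma G_neighborSet_inr (q : ℚ) : G.neighborSet (inr q) = inl '' Iio q := by
  ext (x | x) <;> simp [G]

lemma G_neighborSet_injective : Function.Injective G.neighborSet := by
  rintro (p | p) (q | q) h <;>
    simp only [G_neighborSet_inl, G_neighborSet_inr] at h
  · rw [inr_injective.image_injective.eq_iff, Ioi_inj] at h; rw [h]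
  · simpa using h.subset (mem_image_of_mem inr (lt_add_one p))
  · simpa using h.subset (mem_image_of_mem inl (sub_one_lt p))
  · rw [inl_injective.image_injective.eq_iff, Iio_inj] at h; rw [h]

lemma G_biInter_neighborSet_sdiff_eq_neighborSet_inr (q : ℚ) :
    (⋂ v ∈ G.neighborSet (inl q), G.neighborSet v) \ {inl q} = G.neighborSet (inr q) := by
  simp_rw [G_neighborSet_inl, biInter_image, G_neighborSet_inr]
  rw [← inl_injective.injOn.image_biInter_eq nonempty_Ioi, biInter_Ioi_Iio,
    ← image_singleton, ← image_sdiff inl_injective, Iic_sdiff_right]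

theorem G_minus_unique (q : ℚ) (w : ℚ ⊕ ℚ) :
    G.neighborSet w =
      (⋂ v ∈ G.neighborSet (inl q), G.neighborSet v) \ {inl q} ↔ w = inr q := by
  rw [G_biInter_neighborSet_sdiff_eq_neighborSet_inr, G_neighborSet_injective.eq_iff]
end

section
/- Every automorphism of the graph G on ℚ⁺ ∪ ℚ⁻ with edges q⁺r⁻ for q < r that swaps ℚ⁺ and ℚ⁻ is of the form γ↓ for some order automorphism γ of ℚ, where γ↓(q⁺) = (−γ q)⁻ and γ↓(q⁻) = (−γ q)⁺. -/
/-!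
An automorphism `φ` swapping the two sides is described by two maps `f, g : ℚ → ℚ` with
`φ (inl q) = inr (f q)` and `φ (inr q) = inl (g q)`. Preservation of adjacency says exactly
`q < r ↔ g r < f q`, which forces `f ≤ g` and makes `g` strictly antitone. Density of `ℚ` and
surjectivity of `g` then force `f = g`, so `γ := -f` is a surjective strictly monotone map.
-/

open Sum

section LtIff

variable {α β : Type*} [LinearOrder α] [LinearOrder β] {f g : α → β}

theorem apply_le_of_forall_lt_iff (hfg : ∀ q r, q < r ↔ g r < f q) (q : α) : f q ≤ g q :=
  not_lt.mp fun hlt => lt_irrefl q ((hfg q q).2 hlt)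

theorem strictAnti_of_forall_lt_iff (hfg : ∀ q r, q < r ↔ g r < f q) : StrictAnti g :=
  fun a _ hab => ((hfg a _).1 hab).trans_le (apply_le_of_forall_lt_iff hfg a)

theorem eq_of_forall_lt_iff_of_surjective [DenselyOrdered β] (hfg : ∀ q r, q < r ↔ g r < f q)
    (hg : Function.Surjective g) : f = g := by
  funext q
  refine (apply_le_of_forall_lt_iff hfg q).antisymm (not_lt.mp fun hlt => ?_)
  obtain ⟨t, hft, htg⟩ := exists_between hlt
  obtain ⟨r, rfl⟩ := hg t
  have hqr : q < r := (strictAnti_of_forall_lt_iff hfg).lt_iff_gt.mp htg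
  exact hft.not_gt ((hfg q r).1 hqr)

end LtIff

theorem exists_orderIso_eq_neg_of_strictAnti {α β : Type*} [LinearOrder α] [AddCommGroup β]
    [LinearOrder β] [IsOrderedAddMonoid β] {f : α → β} (hf : StrictAnti f)
    (hsurj : Function.Surjective f) : ∃ γ : α ≃o β, ∀ q, γ q = -f q :=
  ⟨hf.neg.orderIsoOfSurjective _ (neg_surjective.comp hsurj), fun _ => rfl⟩

theorem G_adj_inl_inr {q r : ℚ} : G.Adj (inl q) (inr r) ↔ q < r := Iff.rfl

theorem G_adj_inr_inl {q r : ℚ} : G.Adj (inr r) (inl q) ↔ q < r := Iff.rfl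

theorem G_not_adj_inr_inr {q r : ℚ} : ¬G.Adj (inr q) (inr r) := id

section Swap

variable {φ : G ≃g G} {f g : ℚ → ℚ}

theorem exists_apply_inr_eq_inl (hf : ∀ q, φ (inl q) = inr (f q)) (q : ℚ) :
    ∃ r, φ (inr q) = inl r := by
  have hadj : G.Adj (φ (inl (q - 1))) (φ (inr q)) := φ.map_adj_iff.mpr (sub_one_lt q)
  rw [hf] at hadj
  cases hq : φ (inr q) with
  | inl r => exact ⟨r, rfl⟩
  | inr r => exact absurd (hq ▸ hadj) G_not_adj_inr_inr

theorem lt_iff_of_swap (hf : ∀ q, φ (inl q) = inr (f q)) (hg : ∀ q, φ (inr q) = inl (g q))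
    (q r : ℚ) : q < r ↔ g r < f q := by
  simpa only [hf, hg, G_adj_inl_inr, G_adj_inr_inl] using
    (φ.map_adj_iff (v := inl q) (w := inr r)).symm

theorem surjective_of_swap (hf : ∀ q, φ (inl q) = inr (f q))
    (hg : ∀ q, φ (inr q) = inl (g q)) : Function.Surjective g := by
  intro t
  have ht := φ.apply_symm_apply (inl t)
  cases hq : φ.symm (inl t) with
  | inl q => simp [hq, hf] at ht
  | inr q => exact ⟨q, inl_injective (by rwa [hq, hg] at ht)⟩

end Swap

theorem G_aut_swapping_is_down (φ : G ≃g G) (h : ∀ q : ℚ, ∃ r : ℚ, φ (inl q) = inr r) :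
    ∃ γ : ℚ ≃o ℚ, ∀ q : ℚ, φ (inl q) = inr (-(γ q)) ∧ φ (inr q) = inl (-(γ q)) := by
  choose f hf using h
  choose g hg using exists_apply_inr_eq_inl hf
  have hfg := lt_iff_of_swap hf hg
  have hsurj := surjective_of_swap hf hg
  obtain rfl := eq_of_forall_lt_iff_of_surjective hfg hsurj
  obtain ⟨γ, hγ⟩ := exists_orderIso_eq_neg_of_strictAnti (strictAnti_of_forall_lt_iff hfg) hsurj
  exact ⟨γ, fun q => by simp only [hf, hg, hγ, neg_neg, and_self]⟩
end
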